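/- arXiv:0807.2797 — 5 statements merged into one kernel-verified Lean document; each statement's English description precedes it below -/
import Mathlib

section
/- Let γ > 1 and define F(a, R) = (1/γ)(R + a)^γ − a^(γ−1) R − (1/γ) a^γ. There exists a constant C > 0, depending only on γ, such that for all a > 0 and all R with −a ≤ R ≤ a one has R² ≤ C · F(a, R) · a^(2−γ). -/
noncomputable def F (γ a R : ℝ) : ℝ :=
  (1 / γ) * (R + a) ^ γ - a ^ (γ - 1) * R - (1 / γ) * a ^ γ

/-!
Scaling `R = a t` gives `F γ a R = (a ^ γ / γ) ((1 + t) ^ γ - 1 - γ t)`, so it suffices to bound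
`(1 + t) ^ γ - 1 - γ t` below by `c t ^ 2` on `[-1, 1]`. For `γ ≥ 2` this is Bernoulli's
inequality for `(1 + (2t + t²)) ^ (γ / 2)`. For `1 < γ ≤ 2` the concave Bernoulli inequality
`(1 + t) ^ (2 - γ) ≤ 1 + (2 - γ) t` gives `(1 + t) ^ γ ≥ (1 + t) ^ 2 / (1 + (2 - γ) t)`, and
`(1 + t) ^ 2 = (1 + γ t)(1 + (2 - γ) t) + (γ - 1) ^ 2 t ^ 2`.
-/

open Real

lemma F_eq_mul_rpow_one_add_sub {γ a R : ℝ} (hγ : γ ≠ 0) (ha : 0 < a) (hRa : 0 ≤ R + a) :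
    F γ a R = a ^ γ / γ * ((1 + R / a) ^ γ - 1 - γ * (R / a)) := by
  have h1t : 0 ≤ 1 + R / a := by
    rw [one_add_div ha.ne']; exact div_nonneg (by linarith) ha.le
  have hpow : (R + a) ^ γ = a ^ γ * (1 + R / a) ^ γ := by
    rw [← mul_rpow ha.le h1t, mul_one_add, mul_div_cancel₀ R ha.ne', add_comm]
  rw [F, hpow, rpow_sub_one ha.ne']
  field_simp
  ring

lemma one_add_mul_add_half_mul_sq_le_rpow {γ t : ℝ} (hγ : 2 ≤ γ) (ht : -1 ≤ t) :
    1 + γ * t + γ / 2 * t ^ 2 ≤ (1 + t) ^ γ := by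
  have hsq : 1 + (2 * t + t ^ 2) = (1 + t) ^ (2 : ℝ) := by rw [rpow_two]; ring
  have hbern := one_add_mul_self_le_rpow_one_add (s := 2 * t + t ^ 2) (by nlinarith)
    (p := γ / 2) (by linarith)
  rw [hsq, ← rpow_mul (by linarith), mul_div_cancel₀ γ two_ne_zero] at hbern
  linarith

lemma one_add_mul_add_sq_le_rpow {γ t : ℝ} (hγ₁ : 1 < γ) (hγ₂ : γ ≤ 2) (ht₁ : -1 ≤ t)
    (ht₂ : t ≤ 1) :
    1 + γ * t + (γ - 1) ^ 2 / (3 - γ) * t ^ 2 ≤ (1 + t) ^ γ := by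
  set c := (γ - 1) ^ 2 / (3 - γ)
  set D := 1 + (2 - γ) * t
  have hc : 0 ≤ c := div_nonneg (sq_nonneg _) (by linarith)
  have hD : 0 < D := by nlinarith
  have hcD : c * D ≤ (γ - 1) ^ 2 :=
    calc c * D ≤ c * (3 - γ) := by gcongr; nlinarith
      _ = (γ - 1) ^ 2 := div_mul_cancel₀ _ (by linarith)
  have hsq_le : (1 + t) ^ 2 ≤ (1 + t) ^ γ * D :=
    calc (1 + t) ^ 2 = (1 + t) ^ γ * (1 + t) ^ (2 - γ) := by
          rw [← rpow_add' (by linarith) (by norm_num), add_sub_cancel, rpow_two]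
      _ ≤ (1 + t) ^ γ * D := by
          gcongr
          · exact rpow_nonneg (by linarith) γ
          · exact rpow_one_add_le_one_add_mul_self ht₁ (p := 2 - γ) (by linarith) (by linarith)
  refine le_of_mul_le_mul_right ?_ hD
  calc (1 + γ * t + c * t ^ 2) * D = (1 + γ * t) * D + c * D * t ^ 2 := by ring
    _ ≤ (1 + γ * t) * D + (γ - 1) ^ 2 * t ^ 2 := by gcongr
    _ = (1 + t) ^ 2 := by ring
    _ ≤ (1 + t) ^ γ * D := hsq_le

lemma exists_pos_mul_sq_le_rpow_one_add_sub {γ : ℝ} (hγ : 1 < γ) :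
    ∃ c > 0, ∀ t : ℝ, -1 ≤ t → t ≤ 1 → c * t ^ 2 ≤ (1 + t) ^ γ - 1 - γ * t := by
  rcases le_total 2 γ with h2 | h2
  · exact ⟨γ / 2, by positivity, fun t ht₁ _ => by
      linarith [one_add_mul_add_half_mul_sq_le_rpow h2 ht₁]⟩
  · exact ⟨(γ - 1) ^ 2 / (3 - γ), div_pos (pow_pos (sub_pos.2 hγ) 2) (by linarith),
      fun t ht₁ ht₂ => by linarith [one_add_mul_add_sq_le_rpow hγ h2 ht₁ ht₂]⟩

theorem sq_le_F_mul (γ : ℝ) (hγ : 1 < γ) :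
    ∃ C > 0, ∀ a R : ℝ, 0 < a → -a ≤ R → R ≤ a →
      R ^ 2 ≤ C * F γ a R * a ^ (2 - γ) := by
  obtain ⟨c, hc, hkey⟩ := exists_pos_mul_sq_le_rpow_one_add_sub hγ
  refine ⟨γ / c, by positivity, fun a R ha hR₁ hR₂ => ?_⟩
  rw [F_eq_mul_rpow_one_add_sub (by positivity) ha (by linarith)]
  have ht₁ : -1 ≤ R / a := by rw [le_div_iff₀ ha]; linarith
  have ht₂ : R / a ≤ 1 := by rw [div_le_iff₀ ha]; linarith
  have ha_pow : a ^ γ * a ^ (2 - γ) = a ^ 2 := by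
    rw [← rpow_add ha, add_sub_cancel, rpow_two]
  calc R ^ 2 = a ^ 2 / c * (c * (R / a) ^ 2) := by field_simp
    _ ≤ a ^ 2 / c * ((1 + R / a) ^ γ - 1 - γ * (R / a)) := by
        gcongr; exact hkey _ ht₁ ht₂
    _ = γ / c * (a ^ γ / γ * ((1 + R / a) ^ γ - 1 - γ * (R / a))) * a ^ (2 - γ) := by
        rw [← ha_pow]; field_simp
end

section
/- Let γ > 1 and define F(a, R) = (1/γ)(R + a)^γ − a^(γ−1) R − (1/γ) a^γ. There exists a constant C > 0, depending only on γ, such that for all a > 0 and all R ≥ a one has R^γ ≤ C · F(a, R). -/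
open Real

lemma mul_F_eq {γ : ℝ} (hγ : γ ≠ 0) (a R : ℝ) :
    γ * F γ a R = (R + a) ^ γ - γ * (a ^ (γ - 1) * R) - a ^ γ := by
  rw [F]
  field_simp

lemma rpow_sub_le_mul_F {γ a R : ℝ} (hγ : 1 ≤ γ) (ha : 0 ≤ a) (hR : 0 ≤ R) :
    R ^ γ - γ * (a ^ (γ - 1) * R) ≤ γ * F γ a R := by
  rw [mul_F_eq (by positivity)]
  linarith [add_rpow_le_rpow_add hR ha hγ]

lemma two_rpow_sub_mul_le_mul_F {γ a R : ℝ} (hγ : 1 ≤ γ) (ha : 0 < a) (haR : a ≤ R) :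
    (2 ^ γ - γ - 1) * (a ^ (γ - 1) * R) ≤ γ * F γ a R := by
  have hR : 0 < R := ha.trans_le haR
  have ha_rpow : a ^ γ = a ^ (γ - 1) * a := by
    rw [← rpow_add_one ha.ne', sub_add_cancel]
  have hslope : ((2 * a) ^ γ - a ^ γ) / (2 * a - a) ≤ ((R + a) ^ γ - a ^ γ) / (R + a - a) :=
    (convexOn_rpow hγ).secant_mono (Set.mem_Ici.2 ha.le) (Set.mem_Ici.2 (by positivity))
      (Set.mem_Ici.2 (by positivity)) (by linarith) (by linarith) (by linarith)
  have hchord : (2 ^ γ - 1) * a ^ (γ - 1) * R ≤ (R + a) ^ γ - a ^ (γ - 1) * a := by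
    rw [mul_rpow zero_le_two ha.le, ha_rpow, show 2 * a - a = a by ring, add_sub_cancel_right,
      div_le_div_iff₀ ha hR] at hslope
    nlinarith
  rw [mul_F_eq (by positivity), ha_rpow]
  linarith

lemma two_rpow_sub_self_sub_one_pos {γ : ℝ} (hγ : 1 < γ) : 0 < (2 : ℝ) ^ γ - γ - 1 := by
  have h := one_add_mul_self_lt_rpow_one_add (s := 1) (by norm_num) one_ne_zero hγ
  norm_num at h
  linarith

theorem rpow_le_F (γ : ℝ) (hγ : 1 < γ) :
    ∃ C > 0, ∀ a R : ℝ, 0 < a → a ≤ R →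
      R ^ γ ≤ C * F γ a R := by
  set K : ℝ := 2 ^ γ - γ - 1
  have hK : 0 < K := two_rpow_sub_self_sub_one_pos hγ
  have hγ0 : 0 < γ := one_pos.trans hγ
  refine ⟨γ * (1 + γ / K), by positivity, fun a R ha haR => ?_⟩
  have hR : 0 ≤ R := ha.le.trans haR
  have hfirst := rpow_sub_le_mul_F hγ.le ha.le hR
  have hsecond := two_rpow_sub_mul_le_mul_F hγ.le ha haR
  calc R ^ γ ≤ γ * F γ a R + γ * (a ^ (γ - 1) * R) := by linarith
    _ = γ * F γ a R + γ / K * (K * (a ^ (γ - 1) * R)) := by field_simp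
    _ ≤ γ * F γ a R + γ / K * (γ * F γ a R) := by gcongr
    _ = γ * (1 + γ / K) * F γ a R := by ring
end

section
/- Gronwall-type lemma with quadratic dissipation: Let T > 0 and let f, g', α, β : [0,T] → ℝ be nonnegative measurable functions with f differentiable, g(t) = ∫₀ᵗ g'(s) ds, such that the differential inequality f'(t) + (g'(t))² ≤ α(t) f(t) + β(t) g'(t) g(t) holds for a.e. t ∈ [0,T]. Assume f is bounded, g' ∈ L²([0,T]), α ∈ L¹([0,T]), and t ↦ √t β(t) ∈ L²([0,T]). Then for every t ∈ [0,T]: ( e^{−∫₀ᵗ α} − 1/2 − (1/2)∫₀ᵗ s β(s)² ds ) · ∫₀ᵗ (g'(s))² ds + e^{−∫₀ᵗ α} f(t) ≤ f(0). -/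
/-!
Write `G(t) = ∫₀ᵗ g'²`, `B(t) = ∫₀ᵗ s β(s)²` and `A(t) = ∫₀ᵗ α`. Cauchy–Schwarz gives
`g(s)² ≤ s G(s)`, so by AM–GM the cross term satisfies `β g' g ≤ g'²/2 + G(T) s β²/2` on `[0, T]`.
Integrating the differential inequality then yields, for `t ≤ T`,
`f(t) + G(t) ≤ f(0) + (1 + B(T)) G(T) / 2 + ∫₀ᵗ α (f + G)`,
and Gronwall's inequality in integral form bounds `f(T) + G(T)` by the constant times `e^{A(T)}`.
Since `α` is only integrable, Gronwall is proved by noting that `e^{-A} (c + ∫ α h)` is absolutely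
continuous with almost everywhere nonpositive derivative.
-/

open MeasureTheory Set

theorem LipschitzOnWith.comp_absolutelyContinuousOnInterval {X Y : Type*} [PseudoMetricSpace X]
    [PseudoMetricSpace Y] {g : X → Y} {f : ℝ → X} {K : NNReal} {s : Set X} {a b : ℝ}
    (hg : LipschitzOnWith K g s) (hf : AbsolutelyContinuousOnInterval f a b)
    (hfs : MapsTo f (uIcc a b) s) :
    AbsolutelyContinuousOnInterval (fun x ↦ g (f x)) a b := by
  rw [absolutelyContinuousOnInterval_iff] at hf ⊢
  intro ε hε
  obtain ⟨δ, hδ, hfδ⟩ := hf (ε / (K + 1)) (by positivity)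
  refine ⟨δ, hδ, fun E hE hEδ ↦ ?_⟩
  calc ∑ i ∈ Finset.range E.1, dist (g (f (E.2 i).1)) (g (f (E.2 i).2))
      ≤ ∑ i ∈ Finset.range E.1, K * dist (f (E.2 i).1) (f (E.2 i).2) :=
        Finset.sum_le_sum fun i hi ↦
          hg.dist_le_mul _ (hfs (hE.1 i hi).1) _ (hfs (hE.1 i hi).2)
    _ = K * ∑ i ∈ Finset.range E.1, dist (f (E.2 i).1) (f (E.2 i).2) := by
        rw [Finset.mul_sum]
    _ ≤ K * (ε / (K + 1)) := by gcongr; exact (hfδ E hE hEδ).le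
    _ < ε := by
        rw [mul_div_assoc', div_lt_iff₀ (by positivity)]
        nlinarith

theorem ContDiff.comp_absolutelyContinuousOnInterval {F : Type*} [NormedAddCommGroup F]
    [NormedSpace ℝ F] {g : ℝ → F} {f : ℝ → ℝ} {a b : ℝ} (hg : ContDiff ℝ 1 g)
    (hf : AbsolutelyContinuousOnInterval f a b) :
    AbsolutelyContinuousOnInterval (fun x ↦ g (f x)) a b := by
  obtain ⟨C, hC⟩ := hf.exists_bound
  obtain ⟨K, hK⟩ := hg.contDiffOn.exists_lipschitzOnWith one_ne_zero (convex_Icc (-C) C)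
    isCompact_Icc
  exact hK.comp_absolutelyContinuousOnInterval hf fun x hx ↦ abs_le.1 (hC x hx)

theorem le_mul_exp_integral_of_le_add_integral {h α : ℝ → ℝ} {a b c : ℝ} (hab : a ≤ b)
    (hα : IntervalIntegrable α volume a b) (hα_nonneg : ∀ x ∈ Icc a b, 0 ≤ α x)
    (hαh : IntervalIntegrable (fun x ↦ α x * h x) volume a b)
    (hle : ∀ x ∈ Icc a b, h x ≤ c + ∫ s in a..x, α s * h s) :
    h b ≤ c * Real.exp (∫ s in a..b, α s) := by
  set A := fun x ↦ ∫ s in a..x, α s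
  set R := fun x ↦ ∫ s in a..x, α s * h s
  set F := fun x ↦ Real.exp (-A x) * (c + R x)
  have hA := hα.absolutelyContinuousOnInterval_intervalIntegral left_mem_uIcc
  have hR := hαh.absolutelyContinuousOnInterval_intervalIntegral left_mem_uIcc
  have hF : AbsolutelyContinuousOnInterval F a b :=
    (Real.contDiff_exp.comp_absolutelyContinuousOnInterval hA.fun_neg).fun_mul
      ((LipschitzWith.const c).lipschitzOnWith.absolutelyContinuousOnInterval.fun_add hR)
  -- `F` decreases because `(c + R)' = α h ≤ α (c + R) = A' (c + R)` almost everywhere.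
  have hF_deriv : ∀ᵐ x ∂volume.restrict (Ioc a b), deriv F x ≤ 0 := by
    rw [ae_restrict_iff' measurableSet_Ioc]
    filter_upwards [hα.ae_hasDerivAt_integral, hαh.ae_hasDerivAt_integral] with x hAx hRx hx
    have hx' : x ∈ uIcc a b := uIcc_of_le hab ▸ Ioc_subset_Icc_self hx
    have hFx : HasDerivAt F
        (Real.exp (-A x) * -α x * (c + R x) + Real.exp (-A x) * (α x * h x)) x :=
      ((hAx hx' a left_mem_uIcc).neg.exp).mul ((hRx hx' a left_mem_uIcc).const_add c)
    rw [hFx.deriv]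
    have := mul_le_mul_of_nonneg_left (sub_nonpos.2 (hle x (Ioc_subset_Icc_self hx)))
      (hα_nonneg x (Ioc_subset_Icc_self hx))
    nlinarith [Real.exp_pos (-A x)]
  have hFab : F b ≤ F a := by
    have := hF.integral_deriv_eq_sub
    rw [intervalIntegral.integral_of_le hab] at this
    linarith [integral_nonpos_of_ae hF_deriv]
  have hFa : F a = c := by simp [F, A, R]
  calc h b ≤ c + R b := hle b (right_mem_Icc.2 hab)
    _ = Real.exp (A b) * F b := by
        simp only [F, ← mul_assoc, ← Real.exp_add, add_neg_cancel, Real.exp_zero, one_mul]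
    _ ≤ Real.exp (A b) * c := by gcongr; exact hFa ▸ hFab
    _ = c * Real.exp (∫ s in a..b, α s) := mul_comm _ _

theorem sub_le_integral_of_hasDeriv_right_of_ae_le {f f' φ : ℝ → ℝ} {a b : ℝ} (hab : a ≤ b)
    (hcont : ContinuousOn f (Icc a b))
    (hderiv : ∀ x ∈ Ioo a b, HasDerivWithinAt f (f' x) (Ioi x) x) (hφ : IntegrableOn φ (Icc a b))
    (hf'φ : ∀ᵐ x ∂volume.restrict (Icc a b), f' x ≤ φ x) :
    f b - f a ≤ ∫ x in a..b, φ x := by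
  have hmax : (fun x ↦ max (φ x) (f' x)) =ᵐ[volume.restrict (Icc a b)] φ := by
    filter_upwards [hf'φ] with x hx using max_eq_left hx
  calc f b - f a ≤ ∫ x in a..b, max (φ x) (f' x) :=
        intervalIntegral.sub_le_integral_of_hasDeriv_right_of_le hab hcont hderiv
          (hφ.congr hmax.symm) fun x _ ↦ le_max_right _ _
    _ = ∫ x in a..b, φ x := by
        rw [intervalIntegral.integral_of_le hab, intervalIntegral.integral_of_le hab]
        exact integral_congr_ae (ae_restrict_of_ae_restrict_of_subset Ioc_subset_Icc_self hmax)

theorem sq_integral_le_mul_integral_sq {g : ℝ → ℝ} {a b : ℝ} (hab : a ≤ b)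
    (hg : IntervalIntegrable (fun x ↦ g x ^ 2) volume a b) :
    (∫ x in a..b, g x) ^ 2 ≤ (b - a) * ∫ x in a..b, g x ^ 2 := by
  set I := ∫ x in a..b, g x
  set G := ∫ x in a..b, g x ^ 2
  have hG : 0 ≤ G := intervalIntegral.integral_nonneg hab fun x _ ↦ sq_nonneg _
  by_cases hgi : IntervalIntegrable g volume a b
  swap
  · rw [show I = 0 from intervalIntegral.integral_undef hgi]
    nlinarith
  have hvar : ∫ x in a..b, ((b - a) * g x - I) ^ 2 = (b - a) * ((b - a) * G - I ^ 2) := by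
    have hexpand : ∀ x, ((b - a) * g x - I) ^ 2
        = (b - a) ^ 2 * g x ^ 2 - 2 * (b - a) * I * g x + I ^ 2 := fun x ↦ by ring
    simp only [hexpand]
    rw [intervalIntegral.integral_add ((hg.const_mul _).sub (hgi.const_mul _))
        intervalIntegrable_const,
      intervalIntegral.integral_sub (hg.const_mul _) (hgi.const_mul _),
      intervalIntegral.integral_const_mul, intervalIntegral.integral_const_mul,
      intervalIntegral.integral_const, smul_eq_mul]
    ring
  have hnonneg : 0 ≤ (b - a) * ((b - a) * G - I ^ 2) :=
    hvar ▸ intervalIntegral.integral_nonneg hab fun x _ ↦ sq_nonneg _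
  rcases hab.eq_or_lt with rfl | hlt
  · simp [I]
  · nlinarith [(mul_nonneg_iff_of_pos_left (sub_pos.2 hlt)).1 hnonneg]

theorem ae_deriv_le_of_deriv_add_sq_le {f f' g' α β : ℝ → ℝ} {T : ℝ}
    (hg' : IntervalIntegrable (fun t ↦ g' t ^ 2) volume 0 T)
    (hineq : ∀ᵐ t ∂volume.restrict (Icc 0 T),
      f' t + g' t ^ 2 ≤ α t * f t + β t * g' t * ∫ s in 0..t, g' s) :
    ∀ᵐ t ∂volume.restrict (Icc 0 T),
      f' t ≤ α t * f t - g' t ^ 2 / 2 + (∫ s in 0..T, g' s ^ 2) / 2 * (t * β t ^ 2) := by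
  filter_upwards [hineq, ae_restrict_mem measurableSet_Icc] with t ht htT
  have hcs : (∫ s in 0..t, g' s) ^ 2 ≤ t * ∫ s in 0..T, g' s ^ 2 := by
    refine (sq_integral_le_mul_integral_sq htT.1 (hg'.mono_set ?_)).trans ?_
    · exact uIcc_subset_uIcc_left (uIcc_of_le (htT.1.trans htT.2) ▸ htT)
    · rw [sub_zero]
      exact mul_le_mul_of_nonneg_left (intervalIntegral.integral_mono_interval le_rfl htT.1
        htT.2 (Filter.Eventually.of_forall fun _ ↦ sq_nonneg _) hg') htT.1
  nlinarith [sq_nonneg (g' t - β t * ∫ s in 0..t, g' s),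
    mul_le_mul_of_nonneg_left hcs (sq_nonneg (β t))]

theorem add_integral_sq_le_of_deriv_add_sq_le {f f' g' α β : ℝ → ℝ} {T : ℝ}
    (hf : ∀ t ∈ Icc 0 T, HasDerivAt f (f' t) t)
    (hα : IntervalIntegrable α volume 0 T) (hα_nonneg : ∀ t ∈ Icc 0 T, 0 ≤ α t)
    (hg' : IntervalIntegrable (fun t ↦ g' t ^ 2) volume 0 T)
    (hβ : IntervalIntegrable (fun t ↦ t * β t ^ 2) volume 0 T)
    (hineq : ∀ᵐ t ∂volume.restrict (Icc 0 T),
      f' t + g' t ^ 2 ≤ α t * f t + β t * g' t * ∫ s in 0..t, g' s) :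
    ∀ t ∈ Icc 0 T, f t + ∫ s in 0..t, g' s ^ 2 ≤
      f 0 + (1 + ∫ s in 0..T, s * β s ^ 2) / 2 * (∫ s in 0..T, g' s ^ 2)
        + ∫ s in 0..t, α s * (f s + ∫ u in 0..s, g' u ^ 2) := by
  intro t ht
  set G := fun s ↦ ∫ u in 0..s, g' u ^ 2
  have hT : 0 ≤ T := ht.1.trans ht.2
  have huIcc : uIcc 0 t ⊆ uIcc 0 T := uIcc_subset_uIcc_left (uIcc_of_le hT ▸ ht)
  have hIcc : Icc 0 t ⊆ Icc 0 T := Icc_subset_Icc_right ht.2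
  have hf_cont : ContinuousOn f (uIcc 0 T) := fun s hs ↦
    (hf s (uIcc_of_le hT ▸ hs)).continuousAt.continuousWithinAt
  have hG_cont : ContinuousOn G (uIcc 0 T) :=
    (hg'.absolutelyContinuousOnInterval_intervalIntegral left_mem_uIcc).continuousOn
  have hαf := (hα.mul_continuousOn hf_cont).mono_set huIcc
  have hαfG := (hα.mul_continuousOn (hf_cont.add hG_cont)).mono_set huIcc
  have hg't := (hg'.mono_set huIcc).div_const 2
  have hβt := (hβ.mono_set huIcc).const_mul (G T / 2)
  have henergy := sub_le_integral_of_hasDeriv_right_of_ae_le ht.1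
    (uIcc_of_le ht.1 ▸ hf_cont.mono huIcc)
    (fun s hs ↦ (hf s (hIcc (Ioo_subset_Icc_self hs))).hasDerivWithinAt)
    ((intervalIntegrable_iff_integrableOn_Icc_of_le ht.1).1 ((hαf.sub hg't).add hβt))
    (ae_restrict_of_ae_restrict_of_subset hIcc (ae_deriv_le_of_deriv_add_sq_le hg' hineq))
  rw [intervalIntegral.integral_add (hαf.sub hg't) hβt, intervalIntegral.integral_sub hαf hg't,
    intervalIntegral.integral_div, intervalIntegral.integral_const_mul] at henergy
  have hαf_le : ∫ s in 0..t, α s * f s ≤ ∫ s in 0..t, α s * (f s + G s) :=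
    intervalIntegral.integral_mono_on ht.1 hαf hαfG fun s hs ↦
      mul_le_mul_of_nonneg_left (le_add_of_nonneg_right
        (intervalIntegral.integral_nonneg hs.1 fun _ _ ↦ sq_nonneg _)) (hα_nonneg s (hIcc hs))
  have hG_le : G t ≤ G T := intervalIntegral.integral_mono_interval le_rfl ht.1 ht.2
    (Filter.Eventually.of_forall fun _ ↦ sq_nonneg _) hg'
  have hB_le : ∫ s in 0..t, s * β s ^ 2 ≤ ∫ s in 0..T, s * β s ^ 2 :=
    intervalIntegral.integral_mono_interval le_rfl ht.1 ht.2
      (by filter_upwards [ae_restrict_mem measurableSet_Ioc] with s hs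
          exact mul_nonneg hs.1.le (sq_nonneg _)) hβ
  have hB_nonneg : 0 ≤ ∫ s in 0..t, s * β s ^ 2 :=
    intervalIntegral.integral_nonneg ht.1 fun s hs ↦ mul_nonneg hs.1 (sq_nonneg _)
  have hGT : 0 ≤ G T := intervalIntegral.integral_nonneg hT fun _ _ ↦ sq_nonneg _
  nlinarith [mul_le_mul_of_nonneg_left hB_le hGT]

theorem gronwall_quadratic_dissipation_intervalIntegral {f f' g' α β : ℝ → ℝ} {T : ℝ}
    (hT : 0 ≤ T)
    (hf : ∀ t ∈ Icc 0 T, HasDerivAt f (f' t) t)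
    (hα : IntervalIntegrable α volume 0 T) (hα_nonneg : ∀ t ∈ Icc 0 T, 0 ≤ α t)
    (hg' : IntervalIntegrable (fun t ↦ g' t ^ 2) volume 0 T)
    (hβ : IntervalIntegrable (fun t ↦ t * β t ^ 2) volume 0 T)
    (hineq : ∀ᵐ t ∂volume.restrict (Icc 0 T),
      f' t + g' t ^ 2 ≤ α t * f t + β t * g' t * ∫ s in 0..t, g' s) :
    (Real.exp (-∫ s in 0..T, α s) - 1 / 2 - (1 / 2) * ∫ s in 0..T, s * β s ^ 2)
        * (∫ s in 0..T, g' s ^ 2)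
      + Real.exp (-∫ s in 0..T, α s) * f T ≤ f 0 := by
  have hf_cont : ContinuousOn f (uIcc 0 T) := fun s hs ↦
    (hf s (uIcc_of_le hT ▸ hs)).continuousAt.continuousWithinAt
  have hG_cont := (hg'.absolutelyContinuousOnInterval_intervalIntegral left_mem_uIcc).continuousOn
  have hgronwall := le_mul_exp_integral_of_le_add_integral
    (h := fun s ↦ f s + ∫ u in 0..s, g' u ^ 2) hT hα hα_nonneg
    (hα.mul_continuousOn (hf_cont.add hG_cont))
    (add_integral_sq_le_of_deriv_add_sq_le hf hα hα_nonneg hg' hβ hineq)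
  set A := ∫ s in 0..T, α s
  have hexp : Real.exp (-A) * Real.exp A = 1 := by
    rw [← Real.exp_add, neg_add_cancel, Real.exp_zero]
  have := mul_le_mul_of_nonneg_left hgronwall (Real.exp_pos (-A)).le
  rw [mul_comm _ (Real.exp A), ← mul_assoc, hexp, one_mul] at this
  linarith

theorem gronwall_quadratic_dissipation_general
    (T : ℝ) (f f' g' α β : ℝ → ℝ)
    (hα_nonneg : ∀ t ∈ Set.Icc 0 T, 0 ≤ α t)
    (hf_deriv : ∀ t ∈ Set.Icc 0 T, HasDerivAt f (f' t) t)
    (hg'_L2 : IntegrableOn (fun t => (g' t) ^ 2) (Set.Icc 0 T))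
    (hα_L1 : IntegrableOn α (Set.Icc 0 T))
    (hβ_L2 : IntegrableOn (fun t => t * (β t) ^ 2) (Set.Icc 0 T))
    (hineq : ∀ᵐ t ∂(volume.restrict (Set.Icc 0 T)),
      f' t + (g' t) ^ 2 ≤ α t * f t + β t * g' t * ∫ s in Set.Icc 0 t, g' s) :
    ∀ t ∈ Set.Icc 0 T,
      (Real.exp (-∫ s in Set.Icc 0 t, α s) - 1 / 2
          - (1 / 2) * ∫ s in Set.Icc 0 t, s * (β s) ^ 2)
        * (∫ s in Set.Icc 0 t, (g' s) ^ 2)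
      + Real.exp (-∫ s in Set.Icc 0 t, α s) * f t ≤ f 0 := by
  intro t ht
  have hsub : Icc 0 t ⊆ Icc 0 T := Icc_subset_Icc_right ht.2
  have hIcc : ∀ (φ : ℝ → ℝ) {s : ℝ}, 0 ≤ s → ∫ u in Icc 0 s, φ u = ∫ u in 0..s, φ u :=
    fun φ s hs ↦ by rw [integral_Icc_eq_integral_Ioc, intervalIntegral.integral_of_le hs]
  have hint : ∀ {φ : ℝ → ℝ}, IntegrableOn φ (Icc 0 T) → IntervalIntegrable φ volume 0 t :=
    fun hφ ↦ (intervalIntegrable_iff_integrableOn_Icc_of_le ht.1).2 (hφ.mono_set hsub)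
  rw [hIcc _ ht.1, hIcc _ ht.1, hIcc _ ht.1]
  refine gronwall_quadratic_dissipation_intervalIntegral ht.1 (fun s hs ↦ hf_deriv s (hsub hs))
    (hint hα_L1) (fun s hs ↦ hα_nonneg s (hsub hs)) (hint hg'_L2) (hint hβ_L2) ?_
  filter_upwards [ae_restrict_of_ae_restrict_of_subset hsub hineq,
    ae_restrict_mem measurableSet_Icc] with s hs hst
  rwa [hIcc _ hst.1] at hs

theorem gronwall_quadratic_dissipation
    (T : ℝ) (hT : 0 < T) (f f' g' α β : ℝ → ℝ)
    (hf_nonneg : ∀ t ∈ Set.Icc 0 T, 0 ≤ f t)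
    (hg'_nonneg : ∀ t ∈ Set.Icc 0 T, 0 ≤ g' t)
    (hα_nonneg : ∀ t ∈ Set.Icc 0 T, 0 ≤ α t)
    (hβ_nonneg : ∀ t ∈ Set.Icc 0 T, 0 ≤ β t)
    (hf_deriv : ∀ t ∈ Set.Icc 0 T, HasDerivAt f (f' t) t)
    (hf_bdd : BddAbove (f '' Set.Icc 0 T))
    (hg'_L2 : IntegrableOn (fun t => (g' t) ^ 2) (Set.Icc 0 T))
    (hα_L1 : IntegrableOn α (Set.Icc 0 T))
    (hβ_L2 : IntegrableOn (fun t => t * (β t) ^ 2) (Set.Icc 0 T))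
    (hineq : ∀ᵐ t ∂(volume.restrict (Set.Icc 0 T)),
      f' t + (g' t) ^ 2 ≤ α t * f t + β t * g' t * ∫ s in Set.Icc 0 t, g' s) :
    ∀ t ∈ Set.Icc 0 T,
      (Real.exp (-∫ s in Set.Icc 0 t, α s) - 1 / 2
          - (1 / 2) * ∫ s in Set.Icc 0 t, s * (β s) ^ 2)
        * (∫ s in Set.Icc 0 t, (g' s) ^ 2)
      + Real.exp (-∫ s in Set.Icc 0 t, α s) * f t ≤ f 0 :=
  gronwall_quadratic_dissipation_general T f f' g' α β hα_nonneg hf_deriv hg'_L2 hα_L1 hβ_L2 hineq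
end

section
/- Special case of the generalized Gronwall lemma: under the hypotheses of the previous lemma, if moreover e^{−∫₀ᵗ α(s) ds} − 1/2 − (1/2)∫₀ᵗ s β(s)² ds > 0 for all t ∈ [0,T] and f(0) = 0, then f ≡ 0 and g' = 0 a.e. on [0,T]. -/
/-!
Let `M = max f` on `[0, T]` and `q = ∫₀ᵀ g'²`. Cauchy–Schwarz gives `(∫₀ᵗ g')² ≤ t q`, so Young's
inequality turns the hypothesis into `f' + g'²/2 ≤ M α + (q/2) t β²` almost everywhere.
Integrating from `0`, both `M` and `q/2` are at most `A M + B q/2`, where `A = ∫₀ᵀ α` and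
`B = ∫₀ᵀ t β²`. The positivity hypothesis at `T`, together with `e^A ≥ 1 + A`, forces `A + B < 1`,
hence `M = q = 0`.
-/

open MeasureTheory Set

theorem sq_integral_le_measureReal_univ_mul_integral_sq {X : Type*} [MeasurableSpace X]
    {μ : Measure X} [IsFiniteMeasure μ] {g : X → ℝ} (hg : Integrable (fun x => g x ^ 2) μ) :
    (∫ x, g x ∂μ) ^ 2 ≤ μ.real univ * ∫ x, g x ^ 2 ∂μ := by
  have hQ : 0 ≤ ∫ x, g x ^ 2 ∂μ := integral_nonneg fun _ => sq_nonneg _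
  by_cases hg1 : Integrable g μ
  swap
  -- the Bochner integral of a non-integrable function is `0`
  · rw [integral_undef hg1, zero_pow two_ne_zero]
    exact mul_nonneg measureReal_nonneg hQ
  set I := ∫ x, g x ∂μ
  set m := μ.real univ
  rcases measureReal_nonneg.eq_or_lt with hm | hm
  · have hμ : μ = 0 := by
      rw [← Measure.measure_univ_eq_zero]
      exact (measureReal_eq_zero_iff).1 hm.symm
    simp [I, hμ]
  · have expand : ∫ x, (m * g x - I) ^ 2 ∂μ = m * (m * ∫ x, g x ^ 2 ∂μ - I ^ 2) := by
      have hpoly : (fun x => (m * g x - I) ^ 2)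
          = fun x => m ^ 2 * g x ^ 2 - 2 * m * I * g x + I ^ 2 := by
        funext x; ring
      have h1 : Integrable (fun x => m ^ 2 * g x ^ 2) μ := hg.const_mul _
      have h2 : Integrable (fun x => 2 * m * I * g x) μ := hg1.const_mul _
      have h12 : Integrable (fun x => m ^ 2 * g x ^ 2 - 2 * m * I * g x) μ := h1.sub h2
      rw [hpoly, integral_add h12 (integrable_const _), integral_sub h1 h2,
        integral_const_mul, integral_const_mul, integral_const, smul_eq_mul]
      ring
    have key : 0 ≤ m * (m * ∫ x, g x ^ 2 ∂μ - I ^ 2) :=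
      expand ▸ integral_nonneg fun _ => sq_nonneg _
    nlinarith [(mul_nonneg_iff_of_pos_left hm).1 key]

theorem setIntegral_Icc_le_of_nonneg {w : ℝ → ℝ} {a b t : ℝ} (hw : IntegrableOn w (Icc a b))
    (hw0 : ∀ x ∈ Icc a b, 0 ≤ w x) (ht : t ∈ Icc a b) :
    ∫ x in Icc a t, w x ≤ ∫ x in Icc a b, w x :=
  setIntegral_mono_set hw ((ae_restrict_mem measurableSet_Icc).mono hw0)
    (Icc_subset_Icc_right ht.2).eventuallyLE

theorem sq_setIntegral_Icc_le {g : ℝ → ℝ} {a b t : ℝ}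
    (hg : IntegrableOn (fun x => g x ^ 2) (Icc a b)) (ht : t ∈ Icc a b) :
    (∫ x in Icc a t, g x) ^ 2 ≤ (t - a) * ∫ x in Icc a b, g x ^ 2 := by
  have hCS := sq_integral_le_measureReal_univ_mul_integral_sq
    (hg.mono_set (Icc_subset_Icc_right ht.2))
  rw [measureReal_restrict_apply_univ, Real.volume_real_Icc_of_le ht.1] at hCS
  exact hCS.trans (mul_le_mul_of_nonneg_left
    (setIntegral_Icc_le_of_nonneg hg (fun _ _ => sq_nonneg _) ht) (sub_nonneg.2 ht.1))

theorem sub_le_setIntegral_Icc_of_ae_le {f f' φ : ℝ → ℝ} {a b : ℝ} (hab : a ≤ b)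
    (hf : ContinuousOn f (Icc a b)) (hf' : ∀ x ∈ Ioo a b, HasDerivAt f (f' x) x)
    (hφ : IntegrableOn φ (Icc a b)) (hle : ∀ᵐ x ∂volume.restrict (Icc a b), f' x ≤ φ x) :
    f b - f a ≤ ∫ x in Icc a b, φ x := by
  -- `max φ f'` is an everywhere majorant of `f'` that agrees with `φ` almost everywhere.
  have hψ : (fun x => max (φ x) (f' x)) =ᵐ[volume.restrict (Icc a b)] φ := by
    filter_upwards [hle] with x hx using max_eq_left hx
  calc f b - f a ≤ ∫ x in a..b, max (φ x) (f' x) :=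
        intervalIntegral.sub_le_integral_of_hasDeriv_right_of_le hab hf
          (fun x hx => (hf' x hx).hasDerivWithinAt) (hφ.congr hψ.symm) fun x _ => le_max_right _ _
    _ = ∫ x in Icc a b, φ x := by
        rw [intervalIntegral.integral_of_le hab, ← integral_Icc_eq_integral_Ioc]
        exact integral_congr_ae hψ

theorem sub_add_half_setIntegral_sq_le {f f' g α w : ℝ → ℝ} {a b t c d : ℝ}
    (hc : 0 ≤ c) (hd : 0 ≤ d) (hα0 : ∀ x ∈ Icc a b, 0 ≤ α x) (hw0 : ∀ x ∈ Icc a b, 0 ≤ w x)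
    (hf : ∀ x ∈ Icc a b, HasDerivAt f (f' x) x) (hg : IntegrableOn (fun x => g x ^ 2) (Icc a b))
    (hα : IntegrableOn α (Icc a b)) (hw : IntegrableOn w (Icc a b))
    (hle : ∀ᵐ x ∂volume.restrict (Icc a b), f' x + g x ^ 2 / 2 ≤ c * α x + d * w x)
    (ht : t ∈ Icc a b) :
    f t - f a + (∫ x in Icc a t, g x ^ 2) / 2
      ≤ c * (∫ x in Icc a b, α x) + d * ∫ x in Icc a b, w x := by
  have hsub : Icc a t ⊆ Icc a b := Icc_subset_Icc_right ht.2
  have hcα : IntegrableOn (fun x => c * α x) (Icc a t) := (hα.mono_set hsub).const_mul c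
  have hdw : IntegrableOn (fun x => d * w x) (Icc a t) := (hw.mono_set hsub).const_mul d
  have hg' : IntegrableOn (fun x => g x ^ 2 / 2) (Icc a t) := (hg.mono_set hsub).div_const 2
  have hrhs : IntegrableOn (fun x => c * α x + d * w x) (Icc a t) := hcα.add hdw
  have hftc := sub_le_setIntegral_Icc_of_ae_le (φ := fun x => c * α x + d * w x - g x ^ 2 / 2)
    ht.1 (fun x hx => (hf x (hsub hx)).continuousAt.continuousWithinAt)
    (fun x hx => hf x (hsub (Ioo_subset_Icc_self hx))) (hrhs.sub hg')
    (by filter_upwards [ae_restrict_of_ae_restrict_of_subset hsub hle] with x hx; linarith)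
  have hsplit : ∫ x in Icc a t, (c * α x + d * w x - g x ^ 2 / 2)
      = c * (∫ x in Icc a t, α x) + d * (∫ x in Icc a t, w x) - (∫ x in Icc a t, g x ^ 2) / 2 := by
    rw [integral_sub hrhs hg', integral_add hcα hdw, integral_const_mul, integral_const_mul,
      integral_div]
  nlinarith [mul_le_mul_of_nonneg_left (setIntegral_Icc_le_of_nonneg hα hα0 ht) hc,
    mul_le_mul_of_nonneg_left (setIntegral_Icc_le_of_nonneg hw hw0 ht) hd]

theorem add_half_sq_le_of_add_sq_le {d r b x G K : ℝ} (h : d + x ^ 2 ≤ r + b * x * G)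
    (hG : G ^ 2 ≤ K) : d + x ^ 2 / 2 ≤ r + b ^ 2 * K / 2 := by
  nlinarith [sq_nonneg (x - b * G), mul_le_mul_of_nonneg_left hG (sq_nonneg b)]

theorem add_lt_one_of_exp_neg_sub_pos {A B : ℝ} (hA : 0 ≤ A) (hB : 0 ≤ B)
    (h : 0 < Real.exp (-A) - 1 / 2 - 1 / 2 * B) : A + B < 1 := by
  have hexp : Real.exp (-A) * Real.exp A = 1 := by rw [← Real.exp_add]; simp
  nlinarith [Real.add_one_le_exp A, Real.exp_pos A, mul_nonneg hA hB]

theorem eq_zero_and_eq_zero_of_le_of_add_lt_one {x y A B : ℝ} (hx : 0 ≤ x) (hy : 0 ≤ y)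
    (hA : 0 ≤ A) (hB : 0 ≤ B) (hAB : A + B < 1)
    (hxle : x ≤ A * x + B * y) (hyle : y ≤ A * x + B * y) : x = 0 ∧ y = 0 := by
  constructor <;> nlinarith

theorem gronwall_quadratic_dissipation_uniqueness_general
    (T : ℝ) (hT : 0 < T) (f f' g' α β : ℝ → ℝ)
    (hf_nonneg : ∀ t ∈ Set.Icc 0 T, 0 ≤ f t)
    (hα_nonneg : ∀ t ∈ Set.Icc 0 T, 0 ≤ α t)
    (hf_deriv : ∀ t ∈ Set.Icc 0 T, HasDerivAt f (f' t) t)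
    (hg'_L2 : IntegrableOn (fun t => (g' t) ^ 2) (Set.Icc 0 T))
    (hα_L1 : IntegrableOn α (Set.Icc 0 T))
    (hβ_L2 : IntegrableOn (fun t => t * (β t) ^ 2) (Set.Icc 0 T))
    (hineq : ∀ᵐ t ∂(volume.restrict (Set.Icc 0 T)),
      f' t + (g' t) ^ 2 ≤ α t * f t + β t * g' t * ∫ s in Set.Icc 0 t, g' s)
    (hpos : ∀ t ∈ Set.Icc 0 T,
      0 < Real.exp (-∫ s in Set.Icc 0 t, α s) - 1 / 2
          - (1 / 2) * ∫ s in Set.Icc 0 t, s * (β s) ^ 2)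
    (hf0 : f 0 = 0) :
    (∀ t ∈ Set.Icc 0 T, f t = 0) ∧
      (∀ᵐ t ∂(volume.restrict (Set.Icc 0 T)), g' t = 0) := by
  have hT' : T ∈ Icc 0 T := ⟨hT.le, le_rfl⟩
  obtain ⟨t₀, ht₀, hmax⟩ := isCompact_Icc.exists_isMaxOn ⟨T, hT'⟩
    fun t ht => (hf_deriv t ht).continuousAt.continuousWithinAt
  set q := ∫ s in Icc 0 T, g' s ^ 2
  have hq : 0 ≤ q := integral_nonneg fun _ => sq_nonneg _
  have hw0 : ∀ t ∈ Icc 0 T, 0 ≤ t * β t ^ 2 := fun t ht => mul_nonneg ht.1 (sq_nonneg _)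
  have hdiss : ∀ᵐ t ∂volume.restrict (Icc 0 T),
      f' t + g' t ^ 2 / 2 ≤ f t₀ * α t + q / 2 * (t * β t ^ 2) := by
    filter_upwards [hineq, ae_restrict_mem measurableSet_Icc] with t h ht
    have hG : (∫ s in Icc 0 t, g' s) ^ 2 ≤ t * q := by simpa using sq_setIntegral_Icc_le hg'_L2 ht
    have hyoung := add_half_sq_le_of_add_sq_le h hG
    nlinarith [mul_le_mul_of_nonneg_left (hmax ht) (hα_nonneg t ht)]
  have henergy := fun t (ht : t ∈ Icc 0 T) => sub_add_half_setIntegral_sq_le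
    (hf_nonneg t₀ ht₀) (by positivity) hα_nonneg hw0 hf_deriv hg'_L2 hα_L1 hβ_L2 hdiss ht
  have hA : 0 ≤ ∫ s in Icc 0 T, α s := setIntegral_nonneg measurableSet_Icc hα_nonneg
  have hB : 0 ≤ ∫ s in Icc 0 T, s * β s ^ 2 := setIntegral_nonneg measurableSet_Icc hw0
  have hQ₀ : 0 ≤ ∫ s in Icc 0 t₀, g' s ^ 2 := integral_nonneg fun _ => sq_nonneg _
  obtain ⟨hM, hq0⟩ := eq_zero_and_eq_zero_of_le_of_add_lt_one (y := q / 2) (hf_nonneg t₀ ht₀)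
    (by positivity) hA hB (add_lt_one_of_exp_neg_sub_pos hA hB (hpos T hT'))
    (by linarith [henergy t₀ ht₀]) (by linarith [henergy T hT', hf_nonneg T hT'])
  refine ⟨fun t ht => le_antisymm (hM ▸ hmax ht) (hf_nonneg t ht), ?_⟩
  filter_upwards [(integral_eq_zero_iff_of_nonneg (fun _ => sq_nonneg _) hg'_L2).1
    (by linarith : q = 0)] with t ht
  exact pow_eq_zero_iff two_ne_zero |>.1 ht

theorem gronwall_quadratic_dissipation_uniqueness
    (T : ℝ) (hT : 0 < T) (f f' g' α β : ℝ → ℝ)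
    (hf_nonneg : ∀ t ∈ Set.Icc 0 T, 0 ≤ f t)
    (hg'_nonneg : ∀ t ∈ Set.Icc 0 T, 0 ≤ g' t)
    (hα_nonneg : ∀ t ∈ Set.Icc 0 T, 0 ≤ α t)
    (hβ_nonneg : ∀ t ∈ Set.Icc 0 T, 0 ≤ β t)
    (hf_deriv : ∀ t ∈ Set.Icc 0 T, HasDerivAt f (f' t) t)
    (hf_bdd : BddAbove (f '' Set.Icc 0 T))
    (hg'_L2 : IntegrableOn (fun t => (g' t) ^ 2) (Set.Icc 0 T))
    (hα_L1 : IntegrableOn α (Set.Icc 0 T))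
    (hβ_L2 : IntegrableOn (fun t => t * (β t) ^ 2) (Set.Icc 0 T))
    (hineq : ∀ᵐ t ∂(volume.restrict (Set.Icc 0 T)),
      f' t + (g' t) ^ 2 ≤ α t * f t + β t * g' t * ∫ s in Set.Icc 0 t, g' s)
    (hpos : ∀ t ∈ Set.Icc 0 T,
      0 < Real.exp (-∫ s in Set.Icc 0 t, α s) - 1 / 2
          - (1 / 2) * ∫ s in Set.Icc 0 t, s * (β s) ^ 2)
    (hf0 : f 0 = 0) :
    (∀ t ∈ Set.Icc 0 T, f t = 0) ∧
      (∀ᵐ t ∂(volume.restrict (Set.Icc 0 T)), g' t = 0) :=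
  gronwall_quadratic_dissipation_uniqueness_general T hT f f' g' α β hf_nonneg hα_nonneg hf_deriv
    hg'_L2 hα_L1 hβ_L2 hineq hpos hf0
end

section
/- L^γ control of large densities by relative entropy: let γ ≥ 2, and let ρ, ρ̄ : 𝕋^d → [0,∞) be measurable with ρ̄ ≥ c > 0 and ρ̄ ≤ M. Set R = ρ − ρ̄ and F(ρ̄,R) = (1/γ)ρ^γ − ρ̄^{γ−1}R − (1/γ)ρ̄^γ. Then there is a constant C = C(γ, c, M) such that, pointwise, R² ≤ C F(ρ̄, R) whenever |R| ≤ ρ̄, and R^γ ≤ C F(ρ̄, R) whenever R ≥ ρ̄; consequently ∫_{|R|≤ρ̄} R² dx + ∫_{R≥ρ̄} R^γ dx ≤ C ∫ F(ρ̄, R) dx. -/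
open MeasureTheory RealInnerProductSpace

noncomputable section

abbrev E (d : ℕ) := EuclideanSpace ℝ (Fin d)

/-- Fundamental domain of the torus `𝕋^d = ℝ^d / ℤ^d` (normalized volume 1). -/
def Q (d : ℕ) : Set (E d) := {x | ∀ i, x i ∈ Set.Ico (0 : ℝ) 1}

/-- `ℤ^d`-periodicity: a function on `ℝ^d` descending to the torus. -/
def Per {d : ℕ} {V : Type*} (f : E d → V) : Prop :=
  ∀ (x : E d) (k : Fin d → ℤ),
    f (x + (WithLp.equiv 2 (Fin d → ℝ)).symm fun i => (k i : ℝ)) = f x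

def e (d : ℕ) (i : Fin d) : E d := EuclideanSpace.single i (1 : ℝ)

/-- Divergence of a vector field. -/
def vdiv {d : ℕ} (u : E d → E d) (x : E d) : ℝ :=
  ∑ i, fderiv ℝ u x (e d i) i

/-- Componentwise Laplacian of a vector field. -/
def vlap {d : ℕ} (u : E d → E d) (x : E d) : E d :=
  ∑ i, fderiv ℝ (fun y => fderiv ℝ u y (e d i)) x (e d i)

/-- Squared Frobenius norm of the gradient of a vector field. -/
def gradsq {d : ℕ} (u : E d → E d) (x : E d) : ℝ :=
  ∑ i, ‖fderiv ℝ u x (e d i)‖ ^ 2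

/-! Writing `ρ = ρ̄ t`, the entropy density is `ρ̄^γ / γ` times the Bregman divergence
`t^γ - 1 - γ (t - 1)` of `t ↦ t^γ` at `1`. Two elementary bounds on this divergence — quadratic in
`t - 1` for every `t ≥ 0`, and comparable to `(t - 1)^γ` for `t ≥ 2` — scale back to the pointwise
estimates, with `ρ̄^{γ-2} ≥ c^{γ-2}` absorbing the weight in the quadratic one. The integrated
estimate follows because the density is nonnegative, so each piece is bounded by its integral over
the whole domain. -/

lemma one_add_mul_sub_one_le_rpow {p t : ℝ} (hp : 1 ≤ p) (ht : 0 ≤ t) :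
    1 + p * (t - 1) ≤ t ^ p := by
  simpa using one_add_mul_self_le_rpow_one_add (by linarith : -1 ≤ t - 1) hp

lemma add_one_lt_two_rpow {p : ℝ} (hp : 1 < p) : p + 1 < 2 ^ p := by
  have h := one_add_mul_self_lt_rpow_one_add (s := 1) (by norm_num) one_ne_zero hp
  norm_num at h
  linarith

lemma sq_sub_one_le_rpow_sub {p t : ℝ} (hp : 2 ≤ p) (ht : 0 ≤ t) :
    (t - 1) ^ 2 ≤ t ^ p - 1 - p * (t - 1) := by
  have hsq : (t ^ (p / 2)) ^ 2 = t ^ p := by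
    rw [← Real.rpow_natCast, ← Real.rpow_mul ht]
    norm_num
  rcases le_or_gt 0 (1 + p / 2 * (t - 1)) with hpos | hneg
  · -- `t^p = (t^{p/2})^2` and Bernoulli for the exponent `p/2 ≥ 1`
    have hb := one_add_mul_sub_one_le_rpow (by linarith : 1 ≤ p / 2) ht
    have hsq' := pow_le_pow_left₀ hpos hb 2
    rw [hsq] at hsq'
    nlinarith [mul_nonneg (by nlinarith : 0 ≤ (p / 2) ^ 2 - 1) (sq_nonneg (t - 1))]
  · -- now `1 + p (t - 1) + (t - 1)^2 ≤ 0 ≤ t^p`, as `-1 ≤ t - 1 < 0` and `p / 2 ≥ 1`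
    nlinarith [Real.rpow_nonneg ht p]

lemma mul_sub_one_rpow_le_rpow_sub {p t : ℝ} (hp : 1 ≤ p) (ht : 2 ≤ t) :
    (2 ^ p - (p + 1)) * (t - 1) ^ p ≤ 2 ^ p * (t ^ p - 1 - p * (t - 1)) := by
  have h2p : (0 : ℝ) < 2 ^ p := by positivity
  -- Bernoulli at `t / 2`
  have hhalf : 2 ^ p * (1 + p * (t - 1)) ≤ (p + 1) * t ^ p := by
    have hb := one_add_mul_sub_one_le_rpow hp (by linarith : 0 ≤ t / 2)
    rw [Real.div_rpow (by linarith) zero_le_two, le_div_iff₀ h2p] at hb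
    have hu : 0 ≤ 2 ^ p * (p * ((p - 1) * (t / 2 - 1))) := by
      have : 0 ≤ t / 2 - 1 := by linarith
      have : 0 ≤ p - 1 := by linarith
      positivity
    nlinarith [mul_le_mul_of_nonneg_left hb (by linarith : 0 ≤ p + 1)]
  have hsub : (t - 1) ^ p ≤ t ^ p := Real.rpow_le_rpow (by linarith) (by linarith) (by linarith)
  have hcoef : 0 ≤ 2 ^ p - (p + 1) := by
    have := one_add_mul_sub_one_le_rpow hp zero_le_two
    linarith
  nlinarith [mul_le_mul_of_nonneg_left hsub hcoef]

/-- The paper's `F(a, r - a)`: the density is parametrised by `r = ρ` rather than by `R = ρ - ρ̄`. -/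
def entropyDensity (γ a r : ℝ) : ℝ :=
  (1 / γ) * r ^ γ - a ^ (γ - 1) * (r - a) - (1 / γ) * a ^ γ

lemma entropyDensity_eq {γ a r : ℝ} (hγ : γ ≠ 0) (ha : 0 < a) (hr : 0 ≤ r) :
    entropyDensity γ a r = a ^ γ / γ * ((r / a) ^ γ - 1 - γ * (r / a - 1)) := by
  have hdiv : (r / a) ^ γ = r ^ γ / a ^ γ := Real.div_rpow hr ha.le γ
  have hpred : a ^ (γ - 1) = a ^ γ / a := by rw [Real.rpow_sub_one ha.ne']
  have : a ^ γ ≠ 0 := (Real.rpow_pos_of_pos ha γ).ne'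
  rw [entropyDensity, hdiv, hpred]
  field_simp
  ring

lemma entropyDensity_nonneg {γ a r : ℝ} (hγ : 1 ≤ γ) (ha : 0 < a) (hr : 0 ≤ r) :
    0 ≤ entropyDensity γ a r := by
  rw [entropyDensity_eq (by linarith) ha hr]
  have := one_add_mul_sub_one_le_rpow hγ (div_nonneg hr ha.le)
  have : 0 ≤ a ^ γ / γ := by positivity
  nlinarith

lemma sq_sub_le_mul_entropyDensity {γ c a r : ℝ} (hγ : 2 ≤ γ) (hc : 0 < c) (hca : c ≤ a)
    (hr : 0 ≤ r) :
    (r - a) ^ 2 ≤ γ * c ^ (2 - γ) * entropyDensity γ a r := by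
  have ha : 0 < a := hc.trans_le hca
  have hquad := sq_sub_one_le_rpow_sub hγ (div_nonneg hr ha.le)
  have hweight : a ^ 2 ≤ c ^ (2 - γ) * a ^ γ := by
    have hsplit : a ^ (2 : ℝ) = a ^ (2 - γ) * a ^ γ := by rw [← Real.rpow_add ha]; ring_nf
    rw [← Real.rpow_two, hsplit]
    exact mul_le_mul_of_nonneg_right (Real.rpow_le_rpow_of_nonpos hc hca (by linarith))
      (Real.rpow_nonneg ha.le γ)
  calc (r - a) ^ 2 = a ^ 2 * (r / a - 1) ^ 2 := by field_simp
    _ ≤ c ^ (2 - γ) * a ^ γ * ((r / a) ^ γ - 1 - γ * (r / a - 1)) := by gcongr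
    _ = γ * c ^ (2 - γ) * entropyDensity γ a r := by
      rw [entropyDensity_eq (by linarith) ha hr]
      field_simp

lemma rpow_sub_le_mul_entropyDensity {γ a r : ℝ} (hγ : 1 < γ) (ha : 0 < a) (har : a ≤ r - a) :
    (r - a) ^ γ ≤ γ * 2 ^ γ / (2 ^ γ - (γ + 1)) * entropyDensity γ a r := by
  have hr : 0 ≤ r := by linarith
  have ht : 2 ≤ r / a := by rw [le_div_iff₀ ha]; linarith
  have hcoef : 0 < 2 ^ γ - (γ + 1) := by linarith [add_one_lt_two_rpow hγ]
  have hpow := mul_sub_one_rpow_le_rpow_sub hγ.le ht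
  calc (r - a) ^ γ = a ^ γ * (r / a - 1) ^ γ := by
        rw [← Real.mul_rpow ha.le (by linarith)]
        field_simp
    _ ≤ a ^ γ * (2 ^ γ * ((r / a) ^ γ - 1 - γ * (r / a - 1)) / (2 ^ γ - (γ + 1))) := by
      gcongr
      rwa [le_div_iff₀ hcoef, mul_comm]
    _ = γ * 2 ^ γ / (2 ^ γ - (γ + 1)) * entropyDensity γ a r := by
      rw [entropyDensity_eq (by linarith) ha hr]
      field_simp

lemma setIntegral_le_mul_setIntegral_of_le_mul {α : Type*} [MeasurableSpace α] {μ : Measure α}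
    {s t : Set α} {f g : α → ℝ} {C : ℝ} (ht : MeasurableSet t) (hts : t ⊆ s) (hC : 0 ≤ C)
    (hg : IntegrableOn g s μ) (hg0 : 0 ≤ᵐ[μ.restrict s] g) (hf0 : ∀ x ∈ t, 0 ≤ f x)
    (hfg : ∀ x ∈ t, f x ≤ C * g x) :
    ∫ x in t, f x ∂μ ≤ C * ∫ x in s, g x ∂μ := by
  calc ∫ x in t, f x ∂μ ≤ ∫ x in t, C * g x ∂μ :=
        integral_mono_of_nonneg ((ae_restrict_iff' ht).2 (.of_forall hf0))
          ((hg.mono_set hts).const_mul C) ((ae_restrict_iff' ht).2 (.of_forall hfg))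
    _ = C * ∫ x in t, g x ∂μ := integral_const_mul C _
    _ ≤ C * ∫ x in s, g x ∂μ :=
      mul_le_mul_of_nonneg_left (setIntegral_mono_set hg hg0 hts.eventuallyLE) hC

lemma measurableSet_Q (d : ℕ) : MeasurableSet (Q d) := by
  have h : Q d = ⋂ i, (fun x : E d => x i) ⁻¹' Set.Ico 0 1 := by
    ext x
    simp [Q]
  rw [h]
  exact .iInter fun i => measurable_pi_apply i |>.comp (by fun_prop) measurableSet_Ico

theorem entropy_controls_density_general (d : ℕ) (γ c M : ℝ)
    (hγ : 2 ≤ γ) (hc : 0 < c) :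
    ∃ C > 0, ∀ (ρ ρbar : E d → ℝ),
      Measurable ρ → Measurable ρbar →
      (∀ x, 0 ≤ ρ x) → (∀ x, c ≤ ρbar x) → (∀ x, ρbar x ≤ M) →
      IntegrableOn (fun x =>
        (1 / γ) * ρ x ^ γ - ρbar x ^ (γ - 1) * (ρ x - ρbar x) - (1 / γ) * ρbar x ^ γ)
        (Q d) →
      (∀ x, |ρ x - ρbar x| ≤ ρbar x →
        (ρ x - ρbar x) ^ 2 ≤ C * ((1 / γ) * ρ x ^ γ
          - ρbar x ^ (γ - 1) * (ρ x - ρbar x) - (1 / γ) * ρbar x ^ γ))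
      ∧ (∀ x, ρbar x ≤ ρ x - ρbar x →
        (ρ x - ρbar x) ^ γ ≤ C * ((1 / γ) * ρ x ^ γ
          - ρbar x ^ (γ - 1) * (ρ x - ρbar x) - (1 / γ) * ρbar x ^ γ))
      ∧ (∫ x in Q d ∩ {x | |ρ x - ρbar x| ≤ ρbar x}, (ρ x - ρbar x) ^ 2)
          + (∫ x in Q d ∩ {x | ρbar x ≤ ρ x - ρbar x}, (ρ x - ρbar x) ^ γ)
        ≤ C * ∫ x in Q d,
            (1 / γ) * ρ x ^ γ - ρbar x ^ (γ - 1) * (ρ x - ρbar x)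
              - (1 / γ) * ρbar x ^ γ := by
  set C₁ := γ * c ^ (2 - γ)
  set C₂ := γ * 2 ^ γ / (2 ^ γ - (γ + 1))
  have hC₁ : 0 < C₁ := by positivity
  have hC₂ : 0 < C₂ :=
    div_pos (by positivity) (by linarith [add_one_lt_two_rpow (by linarith : 1 < γ)])
  refine ⟨C₁ + C₂, by positivity, fun ρ ρbar hρ hρbar hρ0 hcρbar _ hF ↦ ?_⟩
  have hρbar0 x : 0 < ρbar x := hc.trans_le (hcρbar x)
  have hF0 x : 0 ≤ entropyDensity γ (ρbar x) (ρ x) :=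
    entropyDensity_nonneg (by linarith) (hρbar0 x) (hρ0 x)
  have hsq x : (ρ x - ρbar x) ^ 2 ≤ C₁ * entropyDensity γ (ρbar x) (ρ x) :=
    sq_sub_le_mul_entropyDensity hγ hc (hcρbar x) (hρ0 x)
  have hpow x (hx : ρbar x ≤ ρ x - ρbar x) :
      (ρ x - ρbar x) ^ γ ≤ C₂ * entropyDensity γ (ρbar x) (ρ x) :=
    rpow_sub_le_mul_entropyDensity (by linarith) (hρbar0 x) hx
  unfold entropyDensity at hF0 hsq hpow
  refine ⟨fun x _ ↦ (hsq x).trans (by nlinarith [hF0 x]),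
    fun x hx ↦ (hpow x hx).trans (by nlinarith [hF0 x]), ?_⟩
  have hQ := measurableSet_Q d
  rw [add_mul]
  exact add_le_add
    (setIntegral_le_mul_setIntegral_of_le_mul (hQ.inter (measurableSet_le (by fun_prop) hρbar))
      Set.inter_subset_left hC₁.le hF (.of_forall hF0) (fun x _ ↦ sq_nonneg _)
      (fun x _ ↦ hsq x))
    (setIntegral_le_mul_setIntegral_of_le_mul (hQ.inter (measurableSet_le hρbar (by fun_prop)))
      Set.inter_subset_left hC₂.le hF (.of_forall hF0)
      (fun x hx ↦ Real.rpow_nonneg ((hρbar0 x).le.trans hx.2) γ) (fun x hx ↦ hpow x hx.2))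

/-- L^γ/L² control of the density difference by the relative entropy. -/
theorem entropy_controls_density (d : ℕ) (hd : 1 ≤ d) (γ c M : ℝ)
    (hγ : 2 ≤ γ) (hc : 0 < c) (hcM : c ≤ M) :
    ∃ C > 0, ∀ (ρ ρbar : E d → ℝ),
      Measurable ρ → Measurable ρbar →
      (∀ x, 0 ≤ ρ x) → (∀ x, c ≤ ρbar x) → (∀ x, ρbar x ≤ M) →
      IntegrableOn (fun x =>
        (1 / γ) * ρ x ^ γ - ρbar x ^ (γ - 1) * (ρ x - ρbar x) - (1 / γ) * ρbar x ^ γ)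
        (Q d) →
      (∀ x, |ρ x - ρbar x| ≤ ρbar x →
        (ρ x - ρbar x) ^ 2 ≤ C * ((1 / γ) * ρ x ^ γ
          - ρbar x ^ (γ - 1) * (ρ x - ρbar x) - (1 / γ) * ρbar x ^ γ))
      ∧ (∀ x, ρbar x ≤ ρ x - ρbar x →
        (ρ x - ρbar x) ^ γ ≤ C * ((1 / γ) * ρ x ^ γ
          - ρbar x ^ (γ - 1) * (ρ x - ρbar x) - (1 / γ) * ρbar x ^ γ))
      ∧ (∫ x in Q d ∩ {x | |ρ x - ρbar x| ≤ ρbar x}, (ρ x - ρbar x) ^ 2)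
          + (∫ x in Q d ∩ {x | ρbar x ≤ ρ x - ρbar x}, (ρ x - ρbar x) ^ γ)
        ≤ C * ∫ x in Q d,
            (1 / γ) * ρ x ^ γ - ρbar x ^ (γ - 1) * (ρ x - ρbar x)
              - (1 / γ) * ρbar x ^ γ :=
  entropy_controls_density_general d γ c M hγ hc
end
end
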